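/- arXiv:1803.09573 — 6 statements merged into one kernel-verified Lean document; each statement's English description precedes it below -/
import Mathlib

section
/- For all integers k ≥ 2 and r ≥ 3 such that r(k-1) is divisible by 3, and every real ε > 0, there exists n₀ ∈ ℕ such that for all n ≥ n₀ one has f(r,k;n) ≥ 3^((1/3)·r·(k-1-ε)·C(n,⌊n/2⌋)). -/
/-!
Take the `ℓ = r(k-1)/3` consecutive layers of `2^[n]` starting at `⌊n/2⌋`. Every map
`g : 𝓕 → {0,1,2}` yields the colouring `A ↦ 3(|A| - ⌊n/2⌋) + g(A) mod r`, and distinct maps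
yield distinct colourings. Along a chain the positions `3(|A| - ⌊n/2⌋) + g(A)` strictly increase
and stay in `[0, r(k-1))`, where each residue mod `r` occurs only `k - 1` times, so no `k`-chain
is monochromatic. Hence `f(r,k;n) ≥ 3^|𝓕|`, and each of the `ℓ` layers has
`(1 - o(1)) C(n,⌊n/2⌋)` members.
-/

/-- An `(r,k)`-colouring of a family `F` of subsets of `[n]`: an assignment of one of `r`
colours to each member of `F` such that no `k`-chain in `F` is monochromatic. -/
def IsRKColouring {n r : ℕ} (k : ℕ) (F : Finset (Finset (Fin n)))
    (c : {A // A ∈ F} → Fin r) : Prop :=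
  ∀ ch : Fin k → {A // A ∈ F},
    (∀ i j : Fin k, i < j → (ch i : Finset (Fin n)) ⊂ (ch j : Finset (Fin n))) →
    ∃ i j : Fin k, c (ch i) ≠ c (ch j)

/-- The number of `(r,k)`-colourings of the family `F ⊆ 2^[n]`. -/
noncomputable def numColourings (r k n : ℕ) (F : Finset (Finset (Fin n))) : ℕ :=
  Nat.card {c : {A // A ∈ F} → Fin r // IsRKColouring k F c}

/-- `F` contains no `k`-chain. -/
def kChainFree (k : ℕ) {n : ℕ} (F : Finset (Finset (Fin n))) : Prop :=
  ¬ ∃ ch : Fin k → Finset (Fin n), (∀ i, ch i ∈ F) ∧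
      ∀ i j : Fin k, i < j → ch i ⊂ ch j

/-- `m_{k-1}`, the size of the family of all subsets of `[n]` of size between
`⌊(n-k+2)/2⌋` and `⌊(n+k-2)/2⌋`. -/
def mSize (n k : ℕ) : ℕ := ∑ i ∈ Finset.Icc ((n - k + 2) / 2) ((n + k - 2) / 2), n.choose i

/-- `f(r,k;n)`: the maximum number of `(r,k)`-colourings over all families in `2^[n]`. -/
noncomputable def fMax (r k n : ℕ) : ℕ :=
  Finset.sup Finset.univ (fun F : Finset (Finset (Fin n)) => numColourings r k n F)

/-- The number of comparable pairs in a family. -/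
def cpairs {n : ℕ} (F : Finset (Finset (Fin n))) : ℕ :=
  ((F ×ˢ F).filter fun p => p.1 ⊂ p.2).card

/-- The weight `w_k(F)` of a set `F ⊆ [n]`. -/
noncomputable def wk (n k : ℕ) (F : Finset (Fin n)) : ℝ :=
  min ((n.choose F.card : ℝ))⁻¹ ((n.choose ((n - k) / 2) : ℝ))⁻¹

/-- The weight `w_k(𝓕)` of a family `𝓕 ⊆ 2^[n]`. -/
noncomputable def wkFam (n k : ℕ) (F : Finset (Finset (Fin n))) : ℝ :=
  ∑ A ∈ F, wk n k A

open Finset Filter Topology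

theorem Finset.card_le_of_forall_lt_mul_of_modEq {r q v : ℕ} (hr : 0 < r) {S : Finset ℕ}
    (hlt : ∀ p ∈ S, p < r * q) (hmod : ∀ p ∈ S, p ≡ v [MOD r]) : #S ≤ q := by
  have hsub : S ⊆ {p ∈ range (r * q) | p ≡ v [MOD r]} := fun p hp ↦
    mem_filter.mpr ⟨mem_range.mpr (hlt p hp), hmod p hp⟩
  calc #S ≤ #{p ∈ range (r * q) | p ≡ v [MOD r]} := card_le_card hsub
    _ = (r * q).count (· ≡ v [MOD r]) := (Nat.count_eq_card_filter_range _ _).symm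
    _ = q := by simp [Nat.count_modEq_card _ hr, Nat.mul_mod_right, hr.ne']

def layerBand (n m ℓ : ℕ) : Finset (Finset (Fin n)) := {A | #A ∈ Ico m (m + ℓ)}

theorem card_layerBand (n m ℓ : ℕ) :
    #(layerBand n m ℓ) = ∑ i ∈ Ico m (m + ℓ), n.choose i := by
  rw [card_eq_sum_card_fiberwise (f := card) (s := layerBand n m ℓ)
    (t := Ico m (m + ℓ)) fun A hA ↦ (mem_filter.mp hA).2]
  refine sum_congr rfl fun i hi ↦ ?_
  have : {A ∈ layerBand n m ℓ | #A = i} = powersetCard i univ := by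
    ext A
    simp only [layerBand, mem_filter, mem_univ, true_and, mem_powersetCard_univ]
    exact ⟨And.right, fun h ↦ ⟨h ▸ hi, h⟩⟩
  rw [this, card_powersetCard, card_univ, Fintype.card_fin]

section Colouring

variable {n m ℓ r s k : ℕ}

def bandColouring (hr : 0 < r) (g : layerBand n m ℓ → Fin s) : layerBand n m ℓ → Fin r :=
  fun A ↦ ⟨(s * (#A.1 - m) + g A) % r, Nat.mod_lt _ hr⟩

theorem isRKColouring_bandColouring (hr : 0 < r) (hk : 0 < k) (hsℓ : s * ℓ ≤ r * (k - 1))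
    (g : layerBand n m ℓ → Fin s) : IsRKColouring k (layerBand n m ℓ) (bandColouring hr g) := by
  intro ch hch
  by_contra! hmono
  have hmem (i : Fin k) : m ≤ #(ch i).1 ∧ #(ch i).1 < m + ℓ :=
    mem_Ico.mp (mem_filter.mp (ch i).2).2
  let pos (i : Fin k) : ℕ := s * (#(ch i).1 - m) + g (ch i)
  have hpos_lt (i : Fin k) : pos i < r * (k - 1) := by
    have hlayer : #(ch i).1 - m + 1 ≤ ℓ := by have := hmem i; omega
    have hg := (g (ch i)).isLt
    have hle := Nat.mul_le_mul_left s hlayer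
    simp only [pos]; nlinarith
  have hpos_mono : StrictMono pos := fun i j hij ↦ by
    have hcard := card_lt_card (hch i j hij)
    have hlayer : #(ch i).1 - m + 1 ≤ #(ch j).1 - m := by have := hmem i; omega
    have hg := (g (ch i)).isLt
    have hle := Nat.mul_le_mul_left s hlayer
    simp only [pos]; nlinarith
  have hpos_mod (i : Fin k) : pos i ≡ pos ⟨0, hk⟩ [MOD r] := congrArg Fin.val (hmono i ⟨0, hk⟩)
  have hk_le := card_le_of_forall_lt_mul_of_modEq hr (S := univ.image pos) (v := pos ⟨0, hk⟩)
    (by simpa using hpos_lt) (by simpa using hpos_mod)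
  rw [card_image_of_injective _ hpos_mono.injective, card_univ, Fintype.card_fin] at hk_le
  omega

theorem bandColouring_injective (hr : 0 < r) (hsr : s ≤ r) :
    Function.Injective (bandColouring (n := n) (m := m) (ℓ := ℓ) (s := s) hr) := by
  intro g g' h
  funext A
  have hmod : (s * (#A.1 - m) + g A) % r = (s * (#A.1 - m) + g' A) % r :=
    congrArg (fun c ↦ (c A : ℕ)) h
  exact Fin.ext ((Nat.ModEq.add_left_cancel' _ hmod).eq_of_lt_of_lt
    ((g A).isLt.trans_le hsr) ((g' A).isLt.trans_le hsr))

theorem pow_card_layerBand_le_numColourings (hr : 0 < r) (hk : 0 < k) (hsr : s ≤ r)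
    (hsℓ : s * ℓ ≤ r * (k - 1)) :
    s ^ #(layerBand n m ℓ) ≤ numColourings r k n (layerBand n m ℓ) := by
  calc s ^ #(layerBand n m ℓ) = Nat.card (layerBand n m ℓ → Fin s) := by simp
    _ ≤ numColourings r k n (layerBand n m ℓ) :=
      Nat.card_le_card_of_injective (fun g ↦ ⟨_, isRKColouring_bandColouring hr hk hsℓ g⟩)
        fun g g' h ↦ bandColouring_injective hr hsr (congrArg Subtype.val h)

end Colouring

theorem choose_mul_sub_pow_le_choose_add_mul_add_pow {n m ℓ : ℕ} (hmn : 2 * m ≤ n) :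
    ∀ i ≤ ℓ, n.choose m * (m - ℓ) ^ i ≤ n.choose (m + i) * (m + ℓ) ^ i := by
  intro i
  induction i with
  | zero => simp
  | succ i ih =>
    intro hi
    have hstep := Nat.choose_succ_right_eq n (m + i)
    have hnum : m - ℓ ≤ n - (m + i) := by omega
    have hden : m + i + 1 ≤ m + ℓ := by omega
    calc n.choose m * (m - ℓ) ^ (i + 1) = n.choose m * (m - ℓ) ^ i * (m - ℓ) := by ring
      _ ≤ n.choose (m + i) * (m + ℓ) ^ i * (n - (m + i)) := Nat.mul_le_mul (ih (by omega)) hnum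
      _ = n.choose (m + i + 1) * (m + ℓ) ^ i * (m + i + 1) := by rw [mul_right_comm, ← hstep]; ring
      _ ≤ n.choose (m + i + 1) * (m + ℓ) ^ i * (m + ℓ) := Nat.mul_le_mul_left _ hden
      _ = n.choose (m + (i + 1)) * (m + ℓ) ^ (i + 1) := by rw [← add_assoc]; ring

theorem mul_choose_mul_sub_pow_le_card_layerBand_mul {n m ℓ : ℕ} (hmn : 2 * m ≤ n) :
    ℓ * (n.choose m * (m - ℓ) ^ ℓ) ≤ #(layerBand n m ℓ) * (m + ℓ) ^ ℓ := by
  have hlayer : ∀ i ∈ Ico m (m + ℓ), n.choose m * (m - ℓ) ^ ℓ ≤ n.choose i * (m + ℓ) ^ ℓ := by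
    intro i hi
    obtain ⟨j, rfl⟩ := Nat.exists_eq_add_of_le (mem_Ico.mp hi).1
    have hj : j ≤ ℓ := by have := (mem_Ico.mp hi).2; omega
    calc n.choose m * (m - ℓ) ^ ℓ = n.choose m * (m - ℓ) ^ j * (m - ℓ) ^ (ℓ - j) := by
          rw [mul_assoc, ← pow_add, Nat.add_sub_cancel' hj]
      _ ≤ n.choose (m + j) * (m + ℓ) ^ j * (m + ℓ) ^ (ℓ - j) :=
          Nat.mul_le_mul (choose_mul_sub_pow_le_choose_add_mul_add_pow hmn j hj)
            (Nat.pow_le_pow_left (by omega) _)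
      _ = n.choose (m + j) * (m + ℓ) ^ ℓ := by rw [mul_assoc, ← pow_add, Nat.add_sub_cancel' hj]
  calc ℓ * (n.choose m * (m - ℓ) ^ ℓ) = #(Ico m (m + ℓ)) • (n.choose m * (m - ℓ) ^ ℓ) := by simp
    _ ≤ ∑ i ∈ Ico m (m + ℓ), n.choose i * (m + ℓ) ^ ℓ := card_nsmul_le_sum _ _ _ hlayer
    _ = #(layerBand n m ℓ) * (m + ℓ) ^ ℓ := by rw [card_layerBand, sum_mul]

theorem tendsto_sub_div_add_pow_atTop (ℓ : ℕ) :
    Tendsto (fun m : ℕ ↦ (((m - ℓ : ℕ) : ℝ) / ((m + ℓ : ℕ) : ℝ)) ^ ℓ) atTop (𝓝 1) := by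
  rw [← tendsto_add_atTop_iff_nat ℓ]
  have : Tendsto (fun m : ℕ ↦ ((m : ℝ) / (m + 2 * ℓ)) ^ ℓ) atTop (𝓝 1) := by
    simpa using (tendsto_natCast_div_add_atTop (2 * ℓ : ℝ)).pow ℓ
  refine this.congr fun m ↦ ?_
  push_cast [Nat.add_sub_cancel]
  ring

theorem eventually_le_card_layerBand (ℓ : ℕ) {η : ℝ} (hη : 0 < η) :
    ∀ᶠ n in atTop, ((ℓ : ℝ) - η) * n.choose (n / 2) ≤ #(layerBand n (n / 2) ℓ) := by
  have hlim : Tendsto (fun n : ℕ ↦ ℓ * (((n / 2 - ℓ : ℕ) : ℝ) / ((n / 2 + ℓ : ℕ) : ℝ)) ^ ℓ)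
      atTop (𝓝 ℓ) := by
    simpa using ((tendsto_sub_div_add_pow_atTop ℓ).comp
      (Nat.tendsto_div_const_atTop two_ne_zero)).const_mul (ℓ : ℝ)
  filter_upwards [hlim.eventually (lt_mem_nhds (sub_lt_self _ hη)), eventually_ge_atTop 2]
    with n hn hn2
  have hpos : (0 : ℝ) < ((n / 2 + ℓ : ℕ) : ℝ) ^ ℓ := by
    have : 0 < n / 2 + ℓ := by omega
    positivity
  have hcount : (ℓ : ℝ) * (n.choose (n / 2) * ((n / 2 - ℓ : ℕ) : ℝ) ^ ℓ)
      ≤ #(layerBand n (n / 2) ℓ) * ((n / 2 + ℓ : ℕ) : ℝ) ^ ℓ := by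
    exact_mod_cast mul_choose_mul_sub_pow_le_card_layerBand_mul (Nat.mul_div_le n 2)
  calc ((ℓ : ℝ) - η) * n.choose (n / 2)
      ≤ ℓ * (((n / 2 - ℓ : ℕ) : ℝ) / ((n / 2 + ℓ : ℕ) : ℝ)) ^ ℓ * n.choose (n / 2) :=
        mul_le_mul_of_nonneg_right hn.le (Nat.cast_nonneg _)
    _ = ℓ * (n.choose (n / 2) * ((n / 2 - ℓ : ℕ) : ℝ) ^ ℓ) / ((n / 2 + ℓ : ℕ) : ℝ) ^ ℓ := by
        rw [div_pow]; ring
    _ ≤ #(layerBand n (n / 2) ℓ) := by rwa [div_le_iff₀ hpos]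

/-- For integers `k ≥ 2`, `r ≥ 3` with `3 ∣ r(k-1)` and real `ε > 0`, for all
sufficiently large `n` one has `f(r,k;n) ≥ 3^((1/3)·r·(k-1-ε)·C(n,⌊n/2⌋))`. -/
theorem fMax_lower_bound (k r : ℕ) (hk : 2 ≤ k) (hr : 3 ≤ r) (hdvd : 3 ∣ r * (k - 1))
    (ε : ℝ) (hε : 0 < ε) :
    ∃ n₀ : ℕ, ∀ n : ℕ, n₀ ≤ n →
      (3 : ℝ) ^ ((1 / 3 : ℝ) * r * ((k : ℝ) - 1 - ε) * (n.choose (n / 2) : ℝ)) ≤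
        (fMax r k n : ℝ) := by
  obtain ⟨ℓ, hℓ⟩ := hdvd
  have hcolour (n : ℕ) : 3 ^ #(layerBand n (n / 2) ℓ) ≤ fMax r k n :=
    (pow_card_layerBand_le_numColourings (by omega) (by omega) hr hℓ.ge).trans
      (le_sup (mem_univ _))
  obtain ⟨n₀, hn₀⟩ := eventually_atTop.mp
    (eventually_le_card_layerBand ℓ (by positivity : 0 < (r : ℝ) * ε / 3))
  refine ⟨n₀, fun n hn ↦ ?_⟩
  have hexp : (1 / 3 : ℝ) * r * ((k : ℝ) - 1 - ε) = ℓ - r * ε / 3 := by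
    have : (r : ℝ) * ((k : ℝ) - 1) = 3 * ℓ := by
      rw [← Nat.cast_one, ← Nat.cast_sub (by omega)]; exact_mod_cast hℓ
    linarith
  calc (3 : ℝ) ^ ((1 / 3 : ℝ) * r * ((k : ℝ) - 1 - ε) * (n.choose (n / 2) : ℝ))
      ≤ (3 : ℝ) ^ (#(layerBand n (n / 2) ℓ) : ℝ) :=
        Real.rpow_le_rpow_of_exponent_le (by norm_num) (hexp ▸ hn₀ n hn)
    _ ≤ fMax r k n := by rw [Real.rpow_natCast]; exact_mod_cast hcolour n
end

section
/- There is a constant C > 1 such that the following holds for every real δ ∈ (0,1/2) and all integers n and k with k ≥ 2 and n ≥ C·δ⁻³·k². If 𝓕 ⊆ 2^[n] is a family with w_k(𝓕) ≥ 1 + r·C(n,⌊n/2⌋)⁻¹ for some real number r, then the number of comparable pairs in 𝓕 is at least (1/2 - δ)·r·n. -/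
open Finset Equiv
open scoped Pointwise Nat

theorem Equiv.Perm.exists_smul_finset_eq {α : Type*} [DecidableEq α] {s t : Finset α}
    (h : #s = #t) : ∃ σ : Perm α, σ • s = t := by
  have := Set.powersetCard.isPretransitive (α := α) (n := #t)
  obtain ⟨σ, hσ⟩ := MulAction.exists_smul_eq (Perm α) (⟨s, h⟩ : Set.powersetCard α #t) ⟨t, rfl⟩
  exact ⟨σ, congrArg Subtype.val hσ⟩

theorem Equiv.Perm.ofSubtype_smul_finset {α : Type*} [DecidableEq α] {p : α → Prop}
    [DecidablePred p] (τ : Perm (Subtype p)) {s : Finset α} (hs : ∀ x ∈ s, p x) :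
    ofSubtype τ • s = (τ • s.subtype p).map (Function.Embedding.subtype p) := by
  ext x
  simp only [smul_finset_def, Perm.smul_def, mem_image, mem_map, mem_subtype,
    Function.Embedding.subtype_apply]
  constructor
  · rintro ⟨y, hy, rfl⟩
    exact ⟨τ ⟨y, hs y hy⟩, ⟨⟨y, hs y hy⟩, hy, rfl⟩, (Perm.ofSubtype_apply_of_mem τ (hs y hy)).symm⟩
  · rintro ⟨_, ⟨y, hy, rfl⟩, rfl⟩
    exact ⟨y, hy, Perm.ofSubtype_apply_coe τ y⟩

theorem Equiv.Perm.exists_smul_finset_eq_and_smul_finset_eq {α : Type*} [DecidableEq α]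
    {A B A' B' : Finset α} (hAB : A ⊆ B) (hAB' : A' ⊆ B') (hA : #A = #A') (hB : #B = #B') :
    ∃ σ : Perm α, σ • A = A' ∧ σ • B = B' := by
  obtain ⟨σ, hσ⟩ := exists_smul_finset_eq hB
  have hσA : σ • A ⊆ B' := hσ ▸ smul_finset_subset_smul_finset hAB
  obtain ⟨τ, hτ⟩ := exists_smul_finset_eq (s := (σ • A).subtype (· ∈ B'))
    (t := A'.subtype (· ∈ B')) (by
      rw [card_subtype, card_subtype, filter_true_of_mem hσA, filter_true_of_mem hAB',
        card_smul_finset, hA])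
  refine ⟨ofSubtype τ * σ, ?_, ?_⟩
  · rw [mul_smul, ofSubtype_smul_finset τ hσA, hτ, subtype_map_of_mem hAB']
  · have huniv : B'.subtype (· ∈ B') = univ := subtype_eq_univ.mpr fun _ => id
    rw [mul_smul, hσ, ofSubtype_smul_finset τ fun _ => id, huniv, smul_finset_univ, ← huniv,
      subtype_map_of_mem fun _ => id]

theorem MulAction.card_filter_smul_eq_mul_card {G X : Type*} [Group G] [Fintype G]
    [MulAction G X] [DecidableEq X] {x : X} {T : Finset X} (hT : (T : Set X) = orbit G x)
    {y : X} (hy : y ∈ T) : #{g : G | g • x = y} * #T = Fintype.card G := by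
  have hfiber : ∀ z ∈ T, #{g : G | g • x = z} = #{g : G | g • x = x} := by
    intro z hz
    obtain ⟨g₀, rfl⟩ := (Set.ext_iff.mp hT z).mp hz
    refine card_equiv (Equiv.mulLeft g₀⁻¹) fun g => ?_
    simp [mul_smul, inv_smul_eq_iff]
  have hmaps : ((univ : Finset G) : Set G).MapsTo (· • x) T := fun g _ => by
    simp [hT]
  rw [← card_univ, card_eq_sum_card_fiberwise hmaps,
    sum_congr rfl fun z hz => (hfiber z hz).trans (hfiber y hy).symm, sum_const, smul_eq_mul,
    mul_comm]

theorem card_flags (α : Type*) [Fintype α] [DecidableEq α] (a b : ℕ) :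
    #{p : Finset α × Finset α | #p.1 = a ∧ #p.2 = b ∧ p.1 ⊆ p.2} =
      (Fintype.card α).choose b * b.choose a := by
  calc _ = #((powersetCard b univ).sigma fun B : Finset α => powersetCard a B) := by
        refine card_nbij' (fun p => ⟨p.2, p.1⟩) (fun q => (q.2, q.1)) ?_ ?_ ?_ ?_ <;>
          intro p <;> simp +contextual
    _ = _ := by
        rw [card_sigma,
          sum_const_nat fun B hB => by rw [card_powersetCard, mem_powersetCard_univ.mp hB],
          card_powersetCard, card_univ]

def initSeg (n i : ℕ) : Finset (Fin n) := {x | (x : ℕ) < i}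

/-- A maximal chain `∅ ⊂ {σ 0} ⊂ {σ 0, σ 1} ⊂ ⋯` of `2^[n]` is encoded by the permutation `σ`;
`A` lies on it iff `A = σ '' {0, …, |A| - 1}`. -/
def OnChain {n : ℕ} (σ : Perm (Fin n)) (A : Finset (Fin n)) : Prop :=
  σ • initSeg n #A = A

instance {n : ℕ} (σ : Perm (Fin n)) : DecidablePred (OnChain σ) :=
  fun _ => inferInstanceAs (Decidable (_ = _))

section OnChain

variable {n : ℕ}

theorem card_initSeg {i : ℕ} (h : i ≤ n) : #(initSeg n i) = i := by
  rw [initSeg, Fin.card_filter_val_lt, min_eq_right h]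

theorem initSeg_mono (n : ℕ) : Monotone (initSeg n) :=
  fun _ _ h _ => by simpa [initSeg] using fun hx => lt_of_lt_of_le hx h

theorem initSeg_self (n : ℕ) : initSeg n n = univ := by
  ext x; simp [initSeg]

theorem card_onChain_and_onChain_mul {A B : Finset (Fin n)} (hAB : A ⊆ B) :
    #{σ : Perm (Fin n) | OnChain σ A ∧ OnChain σ B} * (n.choose #B * (#B).choose #A) = n ! := by
  have hA : #A ≤ n := card_le_univ A |>.trans_eq (Fintype.card_fin n)
  have hB : #B ≤ n := card_le_univ B |>.trans_eq (Fintype.card_fin n)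
  let T : Finset (Finset (Fin n) × Finset (Fin n)) := {p | #p.1 = #A ∧ #p.2 = #B ∧ p.1 ⊆ p.2}
  have hT : (T : Set _) = MulAction.orbit (Perm (Fin n)) (initSeg n #A, initSeg n #B) := by
    ext ⟨A', B'⟩
    simp only [T, coe_filter, mem_univ, true_and, Set.mem_ofPred_eq, MulAction.mem_orbit_iff,
      Prod.smul_mk, Prod.mk.injEq]
    constructor
    · rintro ⟨hA', hB', hAB'⟩
      exact Perm.exists_smul_finset_eq_and_smul_finset_eq (initSeg_mono n (card_le_card hAB))
        hAB' (by rw [card_initSeg hA, hA']) (by rw [card_initSeg hB, hB'])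
    · rintro ⟨σ, rfl, rfl⟩
      exact ⟨by rw [card_smul_finset, card_initSeg hA], by rw [card_smul_finset, card_initSeg hB],
        smul_finset_subset_smul_finset (initSeg_mono n (card_le_card hAB))⟩
  have := MulAction.card_filter_smul_eq_mul_card hT (y := (A, B)) (by simp [T, hAB])
  rw [card_flags, Fintype.card_fin, Fintype.card_perm, Fintype.card_fin] at this
  simp only [Prod.smul_mk, Prod.mk.injEq] at this
  -- the two filters differ only in their decidability instances
  convert this <;> rfl

theorem card_onChain_mul_choose (A : Finset (Fin n)) :
    #{σ : Perm (Fin n) | OnChain σ A} * n.choose #A = n ! := by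
  have huniv : ∀ σ : Perm (Fin n), OnChain σ univ := fun σ => by
    rw [OnChain, card_univ, Fintype.card_fin, initSeg_self, smul_finset_univ]
  simpa [huniv] using card_onChain_and_onChain_mul (subset_univ A)

theorem OnChain.subset_of_card_le {σ : Perm (Fin n)} {A B : Finset (Fin n)}
    (hA : OnChain σ A) (hB : OnChain σ B) (h : #A ≤ #B) : A ⊆ B := by
  rw [← hA, ← hB]; exact smul_finset_subset_smul_finset (initSeg_mono n h)

theorem isChain_filter_onChain (F : Finset (Finset (Fin n))) (σ : Perm (Fin n)) :
    IsChain (· ⊆ ·) ((F.filter (OnChain σ) : Finset _) : Set (Finset (Fin n))) := by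
  intro A hA B hB _
  rw [coe_filter] at hA hB
  exact (le_total #A #B).imp (hA.2.subset_of_card_le hB.2) (hB.2.subset_of_card_le hA.2)

end OnChain

theorem sum_le_add_sum_min_of_star {ι : Type*} [DecidableEq ι] {G : Finset ι}
    {Q : Finset (ι × ι)} {t : ι → ℝ} (ht : ∀ i, 0 ≤ t i) {i₀ : ι} (hi₀ : i₀ ∈ G)
    (hmax : ∀ i ∈ G, t i ≤ t i₀) (hQ : ∀ i ∈ G, i ≠ i₀ → (i, i₀) ∈ Q ∨ (i₀, i) ∈ Q) :
    ∑ i ∈ G, t i ≤ t i₀ + ∑ p ∈ Q, min (t p.1) (t p.2) := by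
  let e : ι → ι × ι := fun i => if (i, i₀) ∈ Q then (i, i₀) else (i₀, i)
  have he : ∀ i ∈ G.erase i₀, e i ∈ Q ∧ min (t (e i).1) (t (e i).2) = t i := by
    intro i hi
    obtain ⟨hne, hiG⟩ := mem_erase.mp hi
    by_cases h : (i, i₀) ∈ Q
    · simp [e, h, hmax i hiG]
    · simp [e, h, (hQ i hiG hne).resolve_left h, hmax i hiG]
  have hinj : Set.InjOn e (G.erase i₀) := by
    refine Set.LeftInvOn.injOn (f₁' := fun p => if p.1 = i₀ then p.2 else p.1) fun i hi => ?_
    have hne : i ≠ i₀ := (mem_erase.mp hi).1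
    by_cases h : (i, i₀) ∈ Q <;> simp [e, h, hne]
  calc ∑ i ∈ G, t i = t i₀ + ∑ i ∈ G.erase i₀, t i := (add_sum_erase G t hi₀).symm
    _ = t i₀ + ∑ p ∈ (G.erase i₀).image e, min (t p.1) (t p.2) := by
        rw [sum_image hinj]; exact congrArg _ (sum_congr rfl fun i hi => (he i hi).2.symm)
    _ ≤ t i₀ + ∑ p ∈ Q, min (t p.1) (t p.2) :=
        (add_le_add_iff_left _).mpr <| sum_le_sum_of_subset_of_nonneg
          (image_subset_iff.mpr fun i hi => (he i hi).1) fun p _ _ => le_min (ht _) (ht _)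

def innerPairs {α : Type*} [Fintype α] [DecidableEq α] (G : Finset (Finset α)) :
    Finset (Finset α × Finset α) :=
  {p ∈ G ×ˢ G | p.1 ⊂ p.2 ∧ ¬(p.1 = ∅ ∧ p.2 = univ)}

theorem sum_le_one_add_sum_min_of_isChain {α : Type*} [Fintype α] [DecidableEq α]
    {G : Finset (Finset α)} (hG : IsChain (· ⊆ ·) (G : Set (Finset α))) {t : Finset α → ℝ}
    (ht0 : ∀ A, 0 ≤ t A) (ht1 : ∀ A, t A ≤ 1) (hbot : ∀ A, t ∅ ≤ t A) (htop : ∀ A, t univ ≤ t A)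
    (hsum : t ∅ + t univ ≤ 1) :
    ∑ A ∈ G, t A ≤ 1 + ∑ p ∈ innerPairs G, min (t p.1) (t p.2) := by
  have hpairs : 0 ≤ ∑ p ∈ innerPairs G, min (t p.1) (t p.2) :=
    sum_nonneg fun p _ => le_min (ht0 _) (ht0 _)
  obtain hmid | ⟨A₀, hA₀, hA₀max⟩ :=
    ({A ∈ G | A ≠ ∅ ∧ A ≠ univ}).eq_empty_or_nonempty.imp id (exists_max_image _ t)
  · have hG : G ⊆ {∅, univ} := fun A hA => by
      by_contra h
      simp only [mem_insert, mem_singleton, not_or] at h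
      simpa [hmid] using (mem_filter.mpr ⟨hA, h⟩ : A ∈ {A ∈ G | A ≠ ∅ ∧ A ≠ univ})
    calc ∑ A ∈ G, t A ≤ ∑ A ∈ {∅, univ}, t A :=
          sum_le_sum_of_subset_of_nonneg hG fun A _ _ => ht0 A
      _ ≤ t ∅ + t univ := by
        rcases eq_or_ne (∅ : Finset α) univ with h | h
        · simp [← h, ht0]
        · rw [sum_pair h]
      _ ≤ _ := by linarith
  · obtain ⟨hA₀G, hA₀bot, hA₀top⟩ := mem_filter.mp hA₀
    have hmax : ∀ A ∈ G, t A ≤ t A₀ := fun A hAG => by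
      by_cases hA : A = ∅ ∨ A = univ
      · rcases hA with rfl | rfl
        exacts [hbot A₀, htop A₀]
      · rw [not_or] at hA
        exact hA₀max A (mem_filter.mpr ⟨hAG, hA⟩)
    refine (sum_le_add_sum_min_of_star ht0 hA₀G hmax fun A hA hne => ?_).trans
      (by gcongr; exact ht1 A₀)
    rcases hG (mem_coe.mpr hA) (mem_coe.mpr hA₀G) hne with h | h
    · exact .inl (mem_filter.mpr
        ⟨mem_product.mpr ⟨hA, hA₀G⟩, h.ssubset_of_ne hne, fun h => hA₀top h.2⟩)
    · exact .inr (mem_filter.mpr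
        ⟨mem_product.mpr ⟨hA₀G, hA⟩, h.ssubset_of_ne hne.symm, fun h => hA₀bot h.1⟩)

theorem Nat.le_choose_of_pos_of_lt {m j : ℕ} (hj : 0 < j) (hjm : j < m) : m ≤ m.choose j := by
  induction m generalizing j with
  | zero => omega
  | succ m ih =>
    obtain ⟨i, rfl⟩ := Nat.exists_eq_add_of_lt hj
    rcases Nat.eq_zero_or_pos i with rfl | hi
    · simp
    · rw [zero_add, Nat.choose_succ_succ']
      have := Nat.choose_pos (show i + 1 ≤ m by omega)
      have := ih hi (by omega)
      omega

theorem Nat.mul_min_choose_le {n a b : ℕ} (hab : a < b) (hbn : b ≤ n) (h : ¬(a = 0 ∧ b = n)) :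
    n * min (n.choose a) (n.choose b) ≤ 2 * (n.choose b * b.choose a) := by
  by_cases hbig : 0 < a ∧ n ≤ 2 * b
  · calc n * min (n.choose a) (n.choose b) ≤ 2 * b * n.choose b :=
          Nat.mul_le_mul hbig.2 (min_le_right _ _)
      _ ≤ 2 * (n.choose b * b.choose a) := by
          have := Nat.le_choose_of_pos_of_lt hbig.1 hab
          rw [mul_assoc, mul_comm b]; gcongr
  · have hsmall : n ≤ 2 * (n - a) ∧ b < n := by omega
    calc n * min (n.choose a) (n.choose b) ≤ 2 * (n - a) * n.choose a :=
          Nat.mul_le_mul hsmall.1 (min_le_left _ _)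
      _ ≤ 2 * (n.choose a * (n - a).choose (b - a)) := by
          have := Nat.le_choose_of_pos_of_lt (m := n - a) (j := b - a) (by omega) (by omega)
          rw [mul_assoc, mul_comm (n - a)]; gcongr
      _ = 2 * (n.choose b * b.choose a) := by rw [Nat.choose_mul hab.le]

theorem Nat.choose_add_mul_pow_le (n m j : ℕ) :
    n.choose (m + j) * (m + 1) ^ j ≤ n.choose m * (n - m) ^ j := by
  induction j with
  | zero => simp
  | succ j ih =>
    calc n.choose (m + (j + 1)) * (m + 1) ^ (j + 1)
        ≤ n.choose (m + j + 1) * (m + j + 1) * (m + 1) ^ j := by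
          rw [pow_succ, ← add_assoc, mul_comm _ (m + 1), ← mul_assoc]; gcongr; omega
      _ = n.choose (m + j) * (n - (m + j)) * (m + 1) ^ j := by rw [Nat.choose_succ_right_eq]
      _ ≤ n.choose (m + j) * (m + 1) ^ j * (n - m) := by
          rw [mul_right_comm]; gcongr; omega
      _ ≤ n.choose m * (n - m) ^ (j + 1) := by
          rw [pow_succ, ← mul_assoc]; gcongr

theorem one_add_pow_le_one_add_two_mul {x : ℝ} {j : ℕ} (hx : 0 ≤ x) (hjx : j * x ≤ 1) :
    (1 + x) ^ j ≤ 1 + 2 * (j * x) := by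
  have hexp : |Real.exp (j * x) - 1| ≤ 2 * |j * x| :=
    Real.abs_exp_sub_one_le (by rwa [abs_of_nonneg (by positivity)])
  rw [abs_of_nonneg (by positivity : (0 : ℝ) ≤ j * x)] at hexp
  calc (1 + x) ^ j ≤ Real.exp x ^ j := by gcongr; linarith [Real.add_one_le_exp x]
    _ = Real.exp (j * x) := (Real.exp_nat_mul x j).symm
    _ ≤ 1 + 2 * (j * x) := by linarith [le_abs_self (Real.exp (j * x) - 1)]

theorem choose_half_le_mul_choose {n k : ℕ} (hk : 4 * k ^ 2 ≤ n) :
    (n.choose (n / 2) : ℝ) ≤ (1 + 8 * k ^ 2 / n) * n.choose ((n - k) / 2) := by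
  set m := (n - k) / 2
  set j := n / 2 - m
  have hkk : k ≤ k ^ 2 := Nat.le_self_pow two_ne_zero k
  have hmj : m + j = n / 2 := by omega
  have hnm : n - m ≤ m + 1 + k := by omega
  have hn4 : n ≤ 4 * (m + 1) := by omega
  set y : ℝ := k / (m + 1)
  have hm1 : (0 : ℝ) < m + 1 := by positivity
  have hjy : j * y ≤ 4 * k ^ 2 / n := by
    rcases Nat.eq_zero_or_pos n with hn | hn
    · have : k = 0 := by nlinarith
      simp [y, this]
    · have hjk : (j : ℝ) ≤ k := by exact_mod_cast (show j ≤ k by omega)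
      calc (j : ℝ) * y ≤ k ^ 2 / (m + 1) := by
            rw [sq, mul_div_assoc]; gcongr
        _ ≤ 4 * k ^ 2 / n := by
            rw [div_le_div_iff₀ hm1 (by positivity)]
            have : (n : ℝ) ≤ 4 * (m + 1) := by exact_mod_cast hn4
            nlinarith
  have hratio : (n.choose (n / 2) : ℝ) ≤ n.choose m * (1 + y) ^ j := by
    have hcast : (n.choose (n / 2) : ℝ) * (m + 1) ^ j ≤ n.choose m * ((n - m : ℕ) : ℝ) ^ j := by
      rw [← hmj]; exact_mod_cast Nat.choose_add_mul_pow_le n m j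
    have hmk : ((n - m : ℕ) : ℝ) ≤ (m + 1) * (1 + y) := by
      rw [mul_add, mul_one, mul_div_cancel₀ _ hm1.ne']; exact_mod_cast hnm
    refine le_of_mul_le_mul_right ?_ (pow_pos hm1 j)
    calc _ ≤ _ := hcast
      _ ≤ n.choose m * ((m + 1) * (1 + y)) ^ j := by gcongr
      _ = _ := by rw [mul_pow]; ring
  calc (n.choose (n / 2) : ℝ) ≤ n.choose m * (1 + y) ^ j := hratio
    _ ≤ n.choose m * (1 + 2 * (j * y)) := by
        gcongr
        exact one_add_pow_le_one_add_two_mul (by positivity)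
          (hjy.trans (div_le_one_of_le₀ (by exact_mod_cast hk) n.cast_nonneg))
    _ ≤ (1 + 8 * k ^ 2 / n) * n.choose m := by
        rw [mul_comm, show 8 * (k : ℝ) ^ 2 / n = 2 * (4 * k ^ 2 / n) by ring]
        gcongr

theorem sum_sum_filter_eq_sum_mul_card {γ β : Type*} [Fintype γ] (s : Finset β)
    (P : γ → β → Prop) [∀ g, DecidablePred (P g)] [∀ b, DecidablePred (P · b)] (f : β → ℝ) :
    ∑ g, ∑ b ∈ s with P g b, f b = ∑ b ∈ s, f b * #{g | P g b} := by
  simp_rw [sum_filter]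
  rw [sum_comm]
  refine sum_congr rfl fun b _ => ?_
  rw [← sum_filter, sum_const, nsmul_eq_mul, mul_comm]

noncomputable def chainWeight (n : ℕ) (c : ℝ) (A : Finset (Fin n)) : ℝ :=
  min 1 (n.choose #A * c)

section chainWeight

variable {n : ℕ} {c : ℝ}

theorem choose_mul_min_inv_choose (A : Finset (Fin n)) :
    (n.choose #A : ℝ) * min ((n.choose #A : ℝ)⁻¹) c = chainWeight n c A := by
  have : (0 : ℝ) < n.choose #A := by
    exact_mod_cast Nat.choose_pos (card_le_univ A |>.trans_eq (Fintype.card_fin n))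
  rw [chainWeight, mul_min_of_nonneg _ _ this.le, mul_inv_cancel₀ this.ne']

theorem chainWeight_nonneg (hc : 0 ≤ c) (A : Finset (Fin n)) : 0 ≤ chainWeight n c A :=
  le_min zero_le_one (by positivity)

theorem chainWeight_le_one (A : Finset (Fin n)) : chainWeight n c A ≤ 1 := min_le_left _ _

theorem chainWeight_empty : chainWeight n c ∅ = min 1 c := by simp [chainWeight]

theorem chainWeight_univ : chainWeight n c univ = min 1 c := by simp [chainWeight]

theorem min_one_le_chainWeight (hc : 0 ≤ c) (A : Finset (Fin n)) :
    min 1 c ≤ chainWeight n c A := by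
  refine min_le_min le_rfl (le_mul_of_one_le_left hc ?_)
  exact_mod_cast Nat.choose_pos (card_le_univ A |>.trans_eq (Fintype.card_fin n))

theorem sum_chainWeight_onChain_le (hc0 : 0 ≤ c) (hc : 2 * c ≤ 1) (F : Finset (Finset (Fin n)))
    (σ : Perm (Fin n)) :
    ∑ A ∈ F with OnChain σ A, chainWeight n c A ≤ 1 + ∑ p ∈ innerPairs F with
      OnChain σ p.1 ∧ OnChain σ p.2, min (chainWeight n c p.1) (chainWeight n c p.2) := by
  convert sum_le_one_add_sum_min_of_isChain (isChain_filter_onChain F σ) (chainWeight_nonneg hc0)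
    chainWeight_le_one (fun A => chainWeight_empty.trans_le (min_one_le_chainWeight hc0 A))
    (fun A => chainWeight_univ.trans_le (min_one_le_chainWeight hc0 A))
    (by rw [chainWeight_empty, chainWeight_univ]; linarith [min_le_right 1 c]) using 3
  ext p
  simp only [innerPairs, mem_filter, mem_product]
  tauto

theorem min_chainWeight_mul_card_onChain_le (hc : 0 ≤ c) {A B : Finset (Fin n)} (hAB : A ⊂ B)
    (hext : ¬(A = ∅ ∧ B = univ)) :
    min (chainWeight n c A) (chainWeight n c B) * #{σ : Perm (Fin n) | OnChain σ A ∧ OnChain σ B}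
      ≤ 2 * c / n * n ! := by
  have hab : #A < #B := card_lt_card hAB
  have hbn : #B ≤ n := card_le_univ B |>.trans_eq (Fintype.card_fin n)
  have hext' : ¬(#A = 0 ∧ #B = n) := by
    have : #B = n ↔ B = univ := by rw [← card_eq_iff_eq_univ, Fintype.card_fin]
    rwa [card_eq_zero, this]
  have hn : (0 : ℝ) < n := by exact_mod_cast hab.trans_le hbn |>.pos
  have hcount : (#{σ : Perm (Fin n) | OnChain σ A ∧ OnChain σ B} : ℝ) *
      (n.choose #B * (#B).choose #A) = n ! := by
    exact_mod_cast card_onChain_and_onChain_mul hAB.subset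
  have hmin : n * min (chainWeight n c A) (chainWeight n c B) ≤
      2 * c * (n.choose #B * (#B).choose #A) := by
    calc n * min (chainWeight n c A) (chainWeight n c B)
        ≤ n * (min (n.choose #A : ℝ) (n.choose #B) * c) := by
          rw [min_mul_of_nonneg _ _ hc]; gcongr <;> exact min_le_right _ _
      _ = c * ((n * min (n.choose #A) (n.choose #B) : ℕ) : ℝ) := by push_cast; ring
      _ ≤ c * ((2 * (n.choose #B * (#B).choose #A) : ℕ) : ℝ) :=
          mul_le_mul_of_nonneg_left (by exact_mod_cast Nat.mul_min_choose_le hab hbn hext') hc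
      _ = _ := by push_cast; ring
  rw [div_mul_eq_mul_div, le_div_iff₀ hn, ← hcount]
  nlinarith [Nat.cast_nonneg (α := ℝ) #{σ : Perm (Fin n) | OnChain σ A ∧ OnChain σ B}]

theorem card_innerPairs_le_cpairs (F : Finset (Finset (Fin n))) : #(innerPairs F) ≤ cpairs F :=
  card_le_card <| monotone_filter_right _ fun _ _ hp => hp.1

theorem sum_min_inv_choose_le (hc0 : 0 ≤ c) (hc : 2 * c ≤ 1) (F : Finset (Finset (Fin n))) :
    ∑ A ∈ F, min ((n.choose #A : ℝ)⁻¹) c ≤ 1 + 2 * c * cpairs F / n := by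
  set t := chainWeight n c with ht
  set P := innerPairs F
  have hpairs : ∀ p ∈ P, min (t p.1) (t p.2) * #{σ : Perm (Fin n) | OnChain σ p.1 ∧ OnChain σ p.2}
      ≤ 2 * c / n * n ! := fun p hp =>
    min_chainWeight_mul_card_onChain_le hc0 (mem_filter.mp hp).2.1 (mem_filter.mp hp).2.2
  have hcount : n ! * ∑ A ∈ F, min ((n.choose #A : ℝ)⁻¹) c ≤ n ! * (1 + 2 * c / n * #P) :=
    calc n ! * ∑ A ∈ F, min ((n.choose #A : ℝ)⁻¹) c
        = ∑ A ∈ F, t A * #{σ : Perm (Fin n) | OnChain σ A} := by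
          rw [mul_sum]
          refine sum_congr rfl fun A _ => ?_
          rw [ht, ← choose_mul_min_inv_choose, ← card_onChain_mul_choose A]
          push_cast; ring
      _ = ∑ σ : Perm (Fin n), ∑ A ∈ F with OnChain σ A, t A :=
          (sum_sum_filter_eq_sum_mul_card F OnChain t).symm
      _ ≤ ∑ σ : Perm (Fin n),
            (1 + ∑ p ∈ P with OnChain σ p.1 ∧ OnChain σ p.2, min (t p.1) (t p.2)) :=
          sum_le_sum fun σ _ => sum_chainWeight_onChain_le hc0 hc F σ
      _ = n ! + ∑ p ∈ P, min (t p.1) (t p.2) *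
            #{σ : Perm (Fin n) | OnChain σ p.1 ∧ OnChain σ p.2} := by
          rw [sum_add_distrib,
            sum_sum_filter_eq_sum_mul_card P (fun σ p => OnChain σ p.1 ∧ OnChain σ p.2)]
          simp [Fintype.card_perm]
      _ ≤ n ! + ∑ p ∈ P, 2 * c / n * n ! := (add_le_add_iff_left _).mpr (sum_le_sum hpairs)
      _ = n ! * (1 + 2 * c / n * #P) := by rw [sum_const, nsmul_eq_mul]; ring
  calc ∑ A ∈ F, min ((n.choose #A : ℝ)⁻¹) c ≤ 1 + 2 * c / n * #P :=
        le_of_mul_le_mul_left hcount (by positivity)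
    _ ≤ 1 + 2 * c / n * cpairs F := by gcongr; exact_mod_cast card_innerPairs_le_cpairs F
    _ = 1 + 2 * c * cpairs F / n := by ring

end chainWeight

theorem mul_le_two_add_mul_cpairs {n k : ℕ} {δ r : ℝ} (hk : 0 < k) (hkn : 4 * k ^ 2 ≤ n)
    (hδ : 16 * k ^ 2 ≤ δ * n) {F : Finset (Finset (Fin n))}
    (hF : 1 + r * ((n.choose (n / 2) : ℝ))⁻¹ ≤ wkFam n k F) :
    r * n ≤ (2 + δ) * cpairs F := by
  have hkk : k ≤ k ^ 2 := Nat.le_self_pow two_ne_zero k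
  have hn : (0 : ℝ) < n := by exact_mod_cast (show 0 < n by omega)
  have hN : (0 : ℝ) < n.choose (n / 2) := by exact_mod_cast Nat.choose_pos (Nat.div_le_self n 2)
  have hM : 2 ≤ n.choose ((n - k) / 2) :=
    (show 2 ≤ n by omega).trans (Nat.le_choose_of_pos_of_lt (by omega) (by omega))
  have hM' : (0 : ℝ) < n.choose ((n - k) / 2) := by positivity
  have hweight : wkFam n k F ≤ 1 + 2 * (n.choose ((n - k) / 2) : ℝ)⁻¹ * cpairs F / n := by
    refine sum_min_inv_choose_le (by positivity) ?_ F
    rw [← div_eq_mul_inv, div_le_one hM']; exact_mod_cast hM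
  have hcentral : (n.choose (n / 2) : ℝ) ≤ (1 + δ / 2) * n.choose ((n - k) / 2) := by
    refine (choose_half_le_mul_choose hkn).trans (mul_le_mul_of_nonneg_right ?_ (by positivity))
    have : 8 * (k : ℝ) ^ 2 / n ≤ δ / 2 := by rw [div_le_iff₀ hn]; linarith
    linarith
  refine le_of_mul_le_mul_right ?_ hM'
  calc r * n * n.choose ((n - k) / 2)
      = (n.choose (n / 2) * n * n.choose ((n - k) / 2)) * (r * (n.choose (n / 2) : ℝ)⁻¹) := by
        field_simp
    _ ≤ (n.choose (n / 2) * n * n.choose ((n - k) / 2)) *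
          (2 * (n.choose ((n - k) / 2) : ℝ)⁻¹ * cpairs F / n) := by
        gcongr; linarith
    _ = 2 * cpairs F * n.choose (n / 2) := by field_simp
    _ ≤ 2 * cpairs F * ((1 + δ / 2) * n.choose ((n - k) / 2)) := by gcongr
    _ = (2 + δ) * cpairs F * n.choose ((n - k) / 2) := by ring

/-- Supersaturation: there is a constant `C > 1` such that for every
`δ ∈ (0, 1/2)` and integers `k ≥ 2`, `n ≥ C·δ⁻³·k²`, any family `𝓕 ⊆ 2^[n]` with
`w_k(𝓕) ≥ 1 + r·C(n,⌊n/2⌋)⁻¹` has at least `(1/2 - δ)·r·n` comparable pairs. -/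
theorem supersaturation_weighted :
    ∃ C : ℝ, 1 < C ∧ ∀ δ : ℝ, δ ∈ Set.Ioo (0 : ℝ) (1 / 2) →
      ∀ n k : ℕ, 2 ≤ k → C * δ⁻¹ ^ 3 * (k : ℝ) ^ 2 ≤ (n : ℝ) →
        ∀ F : Finset (Finset (Fin n)), ∀ r : ℝ,
          1 + r * ((n.choose (n / 2) : ℝ))⁻¹ ≤ wkFam n k F →
          (1 / 2 - δ) * r * (n : ℝ) ≤ (cpairs F : ℝ) := by
  refine ⟨4, by norm_num, ?_⟩
  rintro δ ⟨hδ0, hδ⟩ n k hk hn F r hF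
  have hδn : 16 * (k : ℝ) ^ 2 ≤ δ * n := by
    have hinv : 4 ≤ δ⁻¹ ^ 2 := by
      nlinarith [show 2 < δ⁻¹ by rw [lt_inv_comm₀ two_pos hδ0]; linarith]
    have : δ * (4 * δ⁻¹ ^ 3 * k ^ 2) = 4 * δ⁻¹ ^ 2 * k ^ 2 := by field_simp
    nlinarith [mul_le_mul_of_nonneg_left hn hδ0.le,
      mul_le_mul_of_nonneg_right hinv (sq_nonneg (k : ℝ))]
  have hkn : 4 * k ^ 2 ≤ n := by exact_mod_cast (show (4 * k ^ 2 : ℝ) ≤ n by nlinarith)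
  have hrn := mul_le_two_add_mul_cpairs (by omega) hkn hδn hF
  have hcp : (0 : ℝ) ≤ cpairs F := Nat.cast_nonneg _
  nlinarith [mul_le_mul_of_nonneg_left hrn (by linarith : (0 : ℝ) ≤ 1 / 2 - δ),
    mul_nonneg hδ0.le hcp]
end

section
/- Let n and k be integers with k ≥ 2 and n ≥ 4k². Suppose 𝓕₀, 𝓕₁, …, 𝓕_s are subfamilies of 2^[n] such that |𝓕₀| + Σ_{i=1}^{s} αᵢ|𝓕ᵢ| ≥ m_{k-1} + t for some positive reals α₁,…,α_s and some non-negative integer t. Then w_k(𝓕₀) + (1 + 2k²/n)·Σ_{i=1}^{s} αᵢ·w_k(𝓕ᵢ) ≥ k - 1 + t·C(n,⌊n/2⌋)⁻¹. -/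
/-!
Put `a = ⌊(n-k+2)/2⌋`, `μ = C(n,a)⁻¹` and `ε = C(n,⌊n/2⌋)⁻¹`. A set of size `i` has weight
exactly `C(n,i)⁻¹ ≤ μ` when `a ≤ i ≤ n - a` and weight `≥ μ` otherwise, so `w_k(𝓕) - μ|𝓕|` is
smallest when `𝓕` consists of the levels `a, …, n - a`; this gives
`w_k(𝓕₀) ≥ k - 1 + μ (|𝓕₀| - m_{k-1})`. Every set has weight at least `ε`, and between the levels
`a` and `⌊n/2⌋` consecutive binomial coefficients grow by a factor at most `1 + 2k/n`, whence
`μ ≤ (1 + 2k²/n) ε`. Together with `ε ≤ μ` the size hypothesis turns into the weight bound.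
-/

open Finset

theorem one_add_pow_le_one_add_two_mul_s6 {u : ℝ} {j : ℕ} (hu : 0 ≤ u) (hju : j * u ≤ 1) :
    (1 + u) ^ j ≤ 1 + 2 * (j * u) := by
  have hx : 0 ≤ (j : ℝ) * u := by positivity
  have hexp := Real.abs_exp_sub_one_le (x := j * u) (by rwa [abs_of_nonneg hx])
  rw [abs_of_nonneg hx] at hexp
  calc (1 + u) ^ j ≤ Real.exp u ^ j :=
        pow_le_pow_left₀ (by positivity) (by linarith [Real.add_one_le_exp u]) j
    _ = Real.exp (j * u) := by rw [← Real.exp_nat_mul]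
    _ ≤ 1 + 2 * (j * u) := by linarith [le_abs_self (Real.exp (j * u) - 1)]

namespace Nat

theorem choose_le_choose_of_le_of_le_half {n r s : ℕ} (hrs : r ≤ s) (hs : s ≤ n / 2) :
    n.choose r ≤ n.choose s := by
  induction s, hrs using Nat.le_induction with
  | base => rfl
  | succ s _ ih => exact (ih (by omega)).trans (choose_le_succ_of_lt_half_left (by omega))

theorem choose_le_choose_of_le_of_le_sub {n a i : ℕ} (hai : a ≤ i) (hia : i ≤ n - a) :
    n.choose a ≤ n.choose i := by
  rcases le_or_gt i (n / 2) with hi | hi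
  · exact choose_le_choose_of_le_of_le_half hai hi
  · rw [← choose_symm (hia.trans (sub_le n a))]
    exact choose_le_choose_of_le_of_le_half (by omega) (by omega)

theorem choose_le_choose_of_le_or_sub_le {n d i : ℕ} (hd : d ≤ n / 2) (hi : i ≤ d ∨ n - d ≤ i) :
    n.choose i ≤ n.choose d := by
  rcases hi with hi | hi
  · exact choose_le_choose_of_le_of_le_half hi hd
  rcases le_or_gt i n with hin | hin
  · rw [← choose_symm hin]
    exact choose_le_choose_of_le_of_le_half (by omega) hd
  · simp [choose_eq_zero_of_lt hin]

theorem cast_choose_succ_le {R : Type*} [Field R] [LinearOrder R] [IsStrictOrderedRing R]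
    {n i : ℕ} {c : R} (h : ((n - i : ℕ) : R) ≤ c * (i + 1)) :
    (n.choose (i + 1) : R) ≤ c * n.choose i := by
  have hrec : (n.choose (i + 1) : R) * (i + 1) = n.choose i * (n - i : ℕ) := by
    exact_mod_cast choose_succ_right_eq n i
  refine le_of_mul_le_mul_right ?_ (by positivity : (0 : R) < i + 1)
  calc (n.choose (i + 1) : R) * (i + 1) = n.choose i * (n - i : ℕ) := hrec
    _ ≤ n.choose i * (c * (i + 1)) := mul_le_mul_of_nonneg_left h (by positivity)
    _ = c * n.choose i * (i + 1) := by ring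

theorem cast_choose_succ_le_one_add_mul_choose {n k i : ℕ} (hi : n + 1 ≤ 2 * i + k) (hin : i ≤ n)
    (hkn : k ^ 2 ≤ 2 * n) : (n.choose (i + 1) : ℝ) ≤ (1 + 2 * k / n) * n.choose i := by
  have hn0 : (0 : ℝ) < n := by exact_mod_cast (by nlinarith : 0 < n)
  have hi' : (n : ℝ) + 1 ≤ 2 * i + k := by exact_mod_cast hi
  have hkn' : (k : ℝ) ^ 2 ≤ 2 * n := by exact_mod_cast hkn
  refine cast_choose_succ_le ?_
  rw [Nat.cast_sub hin, add_mul, one_mul, div_mul_eq_mul_div, ← sub_le_iff_le_add',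
    le_div_iff₀ hn0]
  nlinarith

theorem choose_half_le_mul_choose {n k : ℕ} (hk : 2 ≤ k) (hn : 4 * k ^ 2 ≤ n) :
    (n.choose (n / 2) : ℝ) ≤ (1 + 2 * k ^ 2 / n) * n.choose ((n - k + 2) / 2) := by
  have hkn : k ≤ n := by nlinarith
  have hn0 : (0 : ℝ) < n := by exact_mod_cast (by omega : 0 < n)
  set a := (n - k + 2) / 2
  set j := n / 2 - a
  have hj : 2 * j + 1 ≤ k := by omega
  have hgeom := le_geom (u := fun l => (n.choose (a + l) : ℝ)) (by positivity) j fun l hl =>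
    cast_choose_succ_le_one_add_mul_choose (i := a + l) (by omega) (by omega) (by omega)
  simp only [add_zero, show a + j = n / 2 by omega] at hgeom
  have hju : j * (2 * k / n : ℝ) ≤ k ^ 2 / n := by
    rw [mul_div_assoc', ← mul_assoc, mul_comm (j : ℝ)]
    gcongr
    exact_mod_cast (by nlinarith : 2 * j * k ≤ k ^ 2)
  have hpow := one_add_pow_le_one_add_two_mul_s6 (by positivity)
    (hju.trans ((div_le_one hn0).mpr (by exact_mod_cast (by omega : k ^ 2 ≤ n))))
  refine hgeom.trans (mul_le_mul_of_nonneg_right (hpow.trans ?_) (by positivity))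
  linarith [mul_div_assoc 2 ((k : ℝ) ^ 2) n]

end Nat

theorem inv_choose_le_mul_inv_choose_half {n k : ℕ} (hk : 2 ≤ k) (hn : 4 * k ^ 2 ≤ n) :
    ((n.choose ((n - k + 2) / 2) : ℝ))⁻¹ ≤ (1 + 2 * k ^ 2 / n) * ((n.choose (n / 2) : ℝ))⁻¹ := by
  have hkn : k ≤ n := by nlinarith
  have hCa : (0 : ℝ) < n.choose ((n - k + 2) / 2) := by
    exact_mod_cast Nat.choose_pos (by omega)
  have hCc : (0 : ℝ) < n.choose (n / 2) := by exact_mod_cast Nat.choose_pos (by omega)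
  rw [← div_eq_mul_inv, le_div_iff₀ hCc, ← div_eq_inv_mul, div_le_iff₀ hCa]
  exact Nat.choose_half_le_mul_choose hk hn

theorem Finset.sum_min_zero_le_sum {ι M : Type*} [AddCommMonoid M] [LinearOrder M]
    [IsOrderedAddMonoid M] {s t : Finset ι} (hst : s ⊆ t) (f : ι → M) :
    ∑ x ∈ t, min 0 (f x) ≤ ∑ x ∈ s, f x := by
  classical
  calc ∑ x ∈ t, min 0 (f x) = ∑ x ∈ t \ s, min 0 (f x) + ∑ x ∈ s, min 0 (f x) :=
        (sum_sdiff hst).symm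
    _ ≤ ∑ x ∈ s, min 0 (f x) :=
        add_le_of_nonpos_left (sum_nonpos fun _ _ => min_le_left _ _)
    _ ≤ ∑ x ∈ s, f x := sum_le_sum fun _ _ => min_le_right _ _

noncomputable def wkLevel (n k i : ℕ) : ℝ :=
  min ((n.choose i : ℝ))⁻¹ ((n.choose ((n - k) / 2) : ℝ))⁻¹

theorem wk_eq_wkLevel (n k : ℕ) (A : Finset (Fin n)) : wk n k A = wkLevel n k A.card := rfl

theorem inv_choose_half_le_wk (n k : ℕ) (A : Finset (Fin n)) :
    ((n.choose (n / 2) : ℝ))⁻¹ ≤ wk n k A := by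
  have hA : A.card ≤ n := by simpa using A.card_le_univ
  refine le_min (inv_anti₀ ?_ ?_) (inv_anti₀ ?_ ?_)
  · exact_mod_cast Nat.choose_pos hA
  · exact_mod_cast Nat.choose_le_middle _ n
  · exact_mod_cast Nat.choose_pos (by omega)
  · exact_mod_cast Nat.choose_le_middle _ n

theorem inv_choose_half_mul_card_le_wkFam (n k : ℕ) (G : Finset (Finset (Fin n))) :
    ((n.choose (n / 2) : ℝ))⁻¹ * G.card ≤ wkFam n k G := by
  rw [mul_comm, ← nsmul_eq_mul, ← sum_const]
  exact sum_le_sum fun A _ => inv_choose_half_le_wk n k A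

theorem Finset.sum_univ_apply_card {M : Type*} [AddCommMonoid M] (n : ℕ) (f : ℕ → M) :
    ∑ A : Finset (Fin n), f A.card = ∑ i ∈ range (n + 1), n.choose i • f i := by
  simpa using sum_powerset_apply_card f (x := (univ : Finset (Fin n)))

theorem choose_mul_min_zero_wkLevel_sub {n k i : ℕ} (hk : 2 ≤ k) (hkn : k ≤ n) (hi : i ≤ n) :
    (n.choose i : ℝ) * min 0 (wkLevel n k i - ((n.choose ((n - k + 2) / 2) : ℝ))⁻¹) =
      if i ∈ Icc ((n - k + 2) / 2) (n - (n - k + 2) / 2) then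
        1 - ((n.choose ((n - k + 2) / 2) : ℝ))⁻¹ * n.choose i
      else 0 := by
  set a := (n - k + 2) / 2
  set d := (n - k) / 2
  have hda : d + 1 = a := by omega
  have hCa : (0 : ℝ) < n.choose a := by exact_mod_cast Nat.choose_pos (by omega)
  have hCd : (0 : ℝ) < n.choose d := by exact_mod_cast Nat.choose_pos (by omega)
  have hCi : (0 : ℝ) < n.choose i := by exact_mod_cast Nat.choose_pos hi
  have hda' : n.choose d ≤ n.choose a :=
    Nat.choose_le_choose_of_le_of_le_half (by omega) (by omega)
  split_ifs with hmem
  · rw [mem_Icc] at hmem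
    have hai : n.choose a ≤ n.choose i := Nat.choose_le_choose_of_le_of_le_sub hmem.1 hmem.2
    rw [wkLevel, min_eq_left (inv_anti₀ hCd (by exact_mod_cast hda'.trans hai)),
      min_eq_right (sub_nonpos.mpr (inv_anti₀ hCa (by exact_mod_cast hai))), mul_sub,
      mul_inv_cancel₀ hCi.ne', mul_comm]
  · rw [mem_Icc, not_and_or, not_le, not_le] at hmem
    have hid : n.choose i ≤ n.choose d :=
      Nat.choose_le_choose_of_le_or_sub_le (by omega) (by omega)
    rw [min_eq_left (sub_nonneg.mpr ?_), mul_zero]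
    exact le_min (inv_anti₀ hCi (by exact_mod_cast hid.trans hda'))
      (inv_anti₀ hCd (by exact_mod_cast hda'))

theorem sum_Icc_one_sub_inv_choose_mul_choose {n k : ℕ} (hk : 1 ≤ k) (hkn : k ≤ n) :
    ∑ i ∈ Icc ((n - k + 2) / 2) (n - (n - k + 2) / 2),
        (1 - ((n.choose ((n - k + 2) / 2) : ℝ))⁻¹ * n.choose i) =
      k - 1 - ((n.choose ((n - k + 2) / 2) : ℝ))⁻¹ * mSize n k := by
  set a := (n - k + 2) / 2
  set b := (n + k - 2) / 2
  set μ := ((n.choose a : ℝ))⁻¹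
  have hsum : ∑ i ∈ Icc a b, (1 - μ * n.choose i) = k - 1 - μ * mSize n k := by
    rw [sum_sub_distrib, sum_const, Nat.card_Icc, ← mul_sum, mSize, Nat.cast_sum, nsmul_eq_mul,
      mul_one, show b + 1 - a = k - 1 by omega, Nat.cast_pred hk]
  -- `n - a` is `b` or `b + 1` according to the parity of `n + k`; the extra term vanishes.
  rcases (show n - a = b ∨ n - a = b + 1 by omega) with h | h
  · rw [h, hsum]
  · have hCa : (n.choose a : ℝ) ≠ 0 := by exact_mod_cast (Nat.choose_pos (by omega)).ne'
    rw [h, sum_Icc_succ_top (by omega), hsum, ← h, Nat.choose_symm (by omega),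
      inv_mul_cancel₀ hCa, sub_self, add_zero]

theorem sub_one_add_mul_card_sub_mSize_le_wkFam {n k : ℕ} (hk : 2 ≤ k) (hkn : k ≤ n)
    (G : Finset (Finset (Fin n))) :
    (k : ℝ) - 1 + ((n.choose ((n - k + 2) / 2) : ℝ))⁻¹ * (G.card - mSize n k) ≤
      wkFam n k G := by
  set a := (n - k + 2) / 2
  set μ := ((n.choose a : ℝ))⁻¹
  have hlevels : ∑ i ∈ range (n + 1), n.choose i • min 0 (wkLevel n k i - μ) =
      ∑ i ∈ Icc a (n - a), (1 - μ * n.choose i) := by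
    have hsub : Icc a (n - a) ⊆ range (n + 1) := by
      intro i; simp only [mem_Icc, mem_range]; omega
    rw [← inter_eq_right.mpr hsub, ← sum_ite_mem]
    refine sum_congr rfl fun i hi => ?_
    rw [nsmul_eq_mul, choose_mul_min_zero_wkLevel_sub hk hkn (mem_range_succ_iff.mp hi)]
  calc (k : ℝ) - 1 + μ * (G.card - mSize n k)
      = ∑ i ∈ Icc a (n - a), (1 - μ * n.choose i) + μ * G.card := by
        rw [sum_Icc_one_sub_inv_choose_mul_choose (by omega) hkn]; ring
    _ = ∑ A : Finset (Fin n), min 0 (wk n k A - μ) + μ * G.card := by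
        rw [← hlevels, ← sum_univ_apply_card]
        simp only [wk_eq_wkLevel]
    _ ≤ ∑ A ∈ G, (wk n k A - μ) + μ * G.card := by
        gcongr; exact sum_min_zero_le_sum (subset_univ G) _
    _ = wkFam n k G := by rw [sum_sub_distrib, sum_const, nsmul_eq_mul, wkFam]; ring

/-- Transference between sizes and weights: if
`|𝓕₀| + Σᵢ αᵢ|𝓕ᵢ| ≥ m_{k-1} + t` with all `αᵢ > 0` and `t ∈ ℕ`, then
`w_k(𝓕₀) + (1 + 2k²/n)·Σᵢ αᵢ·w_k(𝓕ᵢ) ≥ k - 1 + t·C(n,⌊n/2⌋)⁻¹`. -/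
theorem weight_transference (n k : ℕ) (hk : 2 ≤ k) (hn : 4 * k ^ 2 ≤ n)
    (s : ℕ) (F0 : Finset (Finset (Fin n))) (F : Fin s → Finset (Finset (Fin n)))
    (α : Fin s → ℝ) (hα : ∀ i, 0 < α i) (t : ℕ)
    (hsum : (mSize n k : ℝ) + (t : ℝ) ≤ (F0.card : ℝ) + ∑ i, α i * ((F i).card : ℝ)) :
    (k : ℝ) - 1 + (t : ℝ) * ((n.choose (n / 2) : ℝ))⁻¹ ≤
      wkFam n k F0 + (1 + 2 * (k : ℝ) ^ 2 / (n : ℝ)) * ∑ i, α i * wkFam n k (F i) := by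
  have hkn : k ≤ n := by nlinarith
  set μ := ((n.choose ((n - k + 2) / 2) : ℝ))⁻¹
  set ε := ((n.choose (n / 2) : ℝ))⁻¹
  set T := 1 + 2 * (k : ℝ) ^ 2 / n
  have hCa : (0 : ℝ) < n.choose ((n - k + 2) / 2) := by exact_mod_cast Nat.choose_pos (by omega)
  have hεμ : ε ≤ μ := inv_anti₀ hCa (by exact_mod_cast Nat.choose_le_middle _ n)
  have hμT : μ ≤ T * ε := inv_choose_le_mul_inv_choose_half hk hn
  have hfamilies : μ * ∑ i, α i * ((F i).card : ℝ) ≤ T * ∑ i, α i * wkFam n k (F i) := by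
    calc μ * ∑ i, α i * ((F i).card : ℝ) ≤ T * ε * ∑ i, α i * (F i).card :=
          mul_le_mul_of_nonneg_right hμT
            (sum_nonneg fun i _ => mul_nonneg (hα i).le (Nat.cast_nonneg _))
      _ = T * ∑ i, α i * (ε * (F i).card) := by
          simp_rw [mul_assoc, mul_sum, mul_left_comm ε]
      _ ≤ T * ∑ i, α i * wkFam n k (F i) := by
          gcongr with i
          · exact (hα i).le
          · exact inv_choose_half_mul_card_le_wkFam n k (F i)
  have hF0 := sub_one_add_mul_card_sub_mSize_le_wkFam hk hkn F0
  have ht : μ * t ≤ μ * (F0.card + ∑ i, α i * ((F i).card : ℝ) - mSize n k) :=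
    mul_le_mul_of_nonneg_left (by linarith) (by positivity)
  linarith [mul_le_mul_of_nonneg_left hεμ (Nat.cast_nonneg (α := ℝ) t)]
end

section
/- For every positive integer n and every family 𝓕 ⊆ 2^[n], the number of (2,2)-colourings of 𝓕 is at most 2^(C(n,⌊n/2⌋)). -/
/-!
In a `(2,2)`-colouring comparable members of `𝓕` get different colours. Every member of `𝓕`
that is not minimal contains a minimal one, so its colour is the opposite of that one's: a
colouring is determined by its restriction to the minimal members of `𝓕`. These form an
antichain, which has at most `C(n,⌊n/2⌋)` members by Sperner's theorem.
-/

open Finset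

section MinimalMembers

variable {α : Type*} [PartialOrder α]

open Classical in
noncomputable def minimalMembers (F : Finset α) : Finset α :=
  {A ∈ F | Minimal (· ∈ F) A}

theorem mem_minimalMembers {F : Finset α} {A : α} :
    A ∈ minimalMembers F ↔ Minimal (· ∈ F) A := by
  classical
  simp only [minimalMembers, mem_filter, and_iff_right_iff_imp]
  exact Minimal.prop

theorem isAntichain_minimalMembers (F : Finset α) :
    IsAntichain (· ≤ ·) (minimalMembers F : Set α) :=
  (setOfPred_minimal_antichain (· ∈ F)).subset fun _ hA => mem_minimalMembers.mp hA

theorem exists_mem_minimalMembers_lt [WellFoundedLT α] {F : Finset α} {B : α} (hB : B ∈ F)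
    (hBmin : B ∉ minimalMembers F) : ∃ A ∈ minimalMembers F, A < B := by
  obtain ⟨A, hAB, hAmin⟩ := exists_minimal_le_of_wellFoundedLT (· ∈ F) B hB
  refine ⟨A, mem_minimalMembers.mpr hAmin, hAB.lt_of_ne ?_⟩
  rintro rfl
  exact hBmin (mem_minimalMembers.mpr hAmin)

theorem card_minimalMembers_le {n : ℕ} (F : Finset (Finset (Fin n))) :
    #(minimalMembers F) ≤ n.choose (n / 2) := by
  simpa using (isAntichain_minimalMembers F).sperner

end MinimalMembers

section Colourings

variable {n : ℕ} {F : Finset (Finset (Fin n))}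

theorem IsRKColouring.apply_ne_of_ssubset {r : ℕ} {c : {A // A ∈ F} → Fin r}
    (hc : IsRKColouring 2 F c) {A B : {A // A ∈ F}} (hAB : (A : Finset (Fin n)) ⊂ B) :
    c A ≠ c B := by
  intro hcAB
  obtain ⟨i, j, hij⟩ := hc ![A, B] fun i j hlt => by
    fin_cases i <;> fin_cases j <;> simp_all
  apply hij
  fin_cases i <;> fin_cases j <;> simp [hcAB]

theorem IsRKColouring.eq_of_forall_minimalMembers {c c' : {A // A ∈ F} → Fin 2}
    (hc : IsRKColouring 2 F c) (hc' : IsRKColouring 2 F c')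
    (h : ∀ A (hA : A ∈ F), A ∈ minimalMembers F → c ⟨A, hA⟩ = c' ⟨A, hA⟩) : c = c' := by
  funext ⟨B, hB⟩
  by_cases hBmin : B ∈ minimalMembers F
  · exact h B hB hBmin
  obtain ⟨A, hAmin, hAB⟩ := exists_mem_minimalMembers_lt hB hBmin
  have hA : A ∈ F := (mem_minimalMembers.mp hAmin).prop
  have hne : c ⟨A, hA⟩ ≠ c ⟨B, hB⟩ := hc.apply_ne_of_ssubset (A := ⟨A, hA⟩) hAB
  have hne' : c' ⟨A, hA⟩ ≠ c' ⟨B, hB⟩ := hc'.apply_ne_of_ssubset (A := ⟨A, hA⟩) hAB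
  rw [← h A hA hAmin] at hne'
  omega

theorem numColourings_two_two_le_two_pow_card_minimalMembers :
    numColourings 2 2 n F ≤ 2 ^ #(minimalMembers F) := by
  let restrict (c : {c : {A // A ∈ F} → Fin 2 // IsRKColouring 2 F c})
      (A : {A // A ∈ minimalMembers F}) : Fin 2 :=
    c.1 ⟨A, (mem_minimalMembers.mp A.2).prop⟩
  have hrestrict : Function.Injective restrict := by
    rintro ⟨c, hc⟩ ⟨c', hc'⟩ h
    exact Subtype.ext <| hc.eq_of_forall_minimalMembers hc' fun A _ hAmin =>
      congrFun h ⟨A, hAmin⟩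
  calc numColourings 2 2 n F ≤ Nat.card ({A // A ∈ minimalMembers F} → Fin 2) :=
        Nat.card_le_card_of_injective restrict hrestrict
    _ = 2 ^ #(minimalMembers F) := by simp [Nat.card_eq_fintype_card]

end Colourings

theorem two_two_colourings_upper_general (n : ℕ) (F : Finset (Finset (Fin n))) :
    numColourings 2 2 n F ≤ 2 ^ (n.choose (n / 2)) :=
  numColourings_two_two_le_two_pow_card_minimalMembers.trans <|
    Nat.pow_le_pow_right two_pos (card_minimalMembers_le F)

/-- For every positive `n` and family `𝓕 ⊆ 2^[n]`, the number of
`(2,2)`-colourings of `𝓕` is at most `2^(C(n,⌊n/2⌋))`. -/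
theorem two_two_colourings_upper (n : ℕ) (hn : 0 < n) (F : Finset (Finset (Fin n))) :
    numColourings 2 2 n F ≤ 2 ^ (n.choose (n / 2)) :=
  two_two_colourings_upper_general n F
end

section
/- There is an integer m₀ such that for every integer m ≥ m₀ the following holds with n = 2m+1: the family 𝓕 consisting of all m-element subsets and all (m+1)-element subsets of [n] has strictly more than 4^(C(n,m)) (4,2)-colourings. In particular, since C(n,m) = C(n,⌊n/2⌋), the family 𝓕 admits more (4,2)-colourings than any antichain in 2^[n]. -/
/-!
An antichain has no 2-chains, so all `4^|G|` of its colourings count, and `|G| ≤ C(n,m)` by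
Sperner. The two middle levels do better because strict inclusions only go from level `m` to
level `m+1`: colouring a set by the pair (its level shifted by a global `s ∈ Fin 2`, a free bit)
keeps every 2-chain bichromatic, and these `2 · 2^(2 C(n,m)) = 2 · 4^C(n,m)` colourings are
pairwise distinct.
-/

open Finset

theorem numColourings_two_of_isAntichain {n : ℕ} (r : ℕ) {G : Finset (Finset (Fin n))}
    (hG : IsAntichain (· ⊆ ·) (G : Set (Finset (Fin n)))) :
    numColourings r 2 n G = r ^ #G := by
  have hall (c : {A // A ∈ G} → Fin r) : IsRKColouring 2 G c := fun ch hch =>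
    absurd (hch 0 1 (by decide)).subset (hG (ch 0).2 (ch 1).2 (hch 0 1 (by decide)).ne)
  rw [numColourings, Nat.card_congr (Equiv.subtypeUnivEquiv hall), Nat.card_eq_fintype_card,
    Fintype.card_fun, Fintype.card_coe, Fintype.card_fin]

theorem mul_pow_card_le_numColourings_two {n a b : ℕ} {F : Finset (Finset (Fin n))}
    (hF : F.Nonempty) (level : Finset (Fin n) → Fin a)
    (hlevel : ∀ A ∈ F, ∀ B ∈ F, A ⊂ B → level A ≠ level B) :
    a * b ^ #F ≤ numColourings (a * b) 2 n F := by
  let colour (x : Fin a × ({A // A ∈ F} → Fin b)) : {A // A ∈ F} → Fin (a * b) :=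
    fun A => finProdFinEquiv (level A + x.1, x.2 A)
  have hcolour (x) : IsRKColouring 2 F (colour x) := fun ch hch => ⟨0, 1, fun h =>
    hlevel _ (ch 0).2 _ (ch 1).2 (hch 0 1 (by decide))
      (add_right_cancel (congrArg Prod.fst (finProdFinEquiv.injective h)))⟩
  have hinj : Function.Injective
      fun x => (⟨colour x, hcolour x⟩ : {c // IsRKColouring 2 F c}) := by
    rintro ⟨s, g⟩ ⟨s', g'⟩ h
    have hA (A : {A // A ∈ F}) : (level A + s, g A) = (level A + s', g' A) :=
      finProdFinEquiv.injective (congrFun (congrArg Subtype.val h) A)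
    obtain ⟨A₀, hA₀⟩ := hF
    exact Prod.ext (add_left_cancel (congrArg Prod.fst (hA ⟨A₀, hA₀⟩)))
      (funext fun A => congrArg Prod.snd (hA A))
  calc a * b ^ #F = Nat.card (Fin a × ({A // A ∈ F} → Fin b)) := by simp
    _ ≤ numColourings (a * b) 2 n F := Nat.card_le_card_of_injective _ hinj

theorem card_two_levels (n m : ℕ) :
    #(powersetCard m (univ : Finset (Fin n)) ∪ powersetCard (m + 1) univ) =
      n.choose m + n.choose (m + 1) := by
  rw [card_union_of_disjoint, card_powersetCard, card_powersetCard, card_fin]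
  exact disjoint_left.2 fun A h₁ h₂ => by
    rw [mem_powersetCard_univ] at h₁ h₂
    omega

theorem card_eq_of_ssubset_of_mem_two_levels {n m : ℕ} {A B : Finset (Fin n)}
    (hA : A ∈ powersetCard m univ ∪ powersetCard (m + 1) univ)
    (hB : B ∈ powersetCard m univ ∪ powersetCard (m + 1) univ) (hAB : A ⊂ B) :
    #A = m ∧ #B = m + 1 := by
  have := card_lt_card hAB
  simp only [mem_union, mem_powersetCard_univ] at hA hB
  omega

/-- For all sufficiently large `m`, with `n = 2m+1`, the union of the two
middle levels of `2^[n]` has strictly more than `4^(C(n,m))` `(4,2)`-colourings, and in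
particular more `(4,2)`-colourings than any antichain in `2^[n]`. -/
theorem four_colourings_two_levels_beat_antichains :
    ∃ m₀ : ℕ, ∀ m : ℕ, m₀ ≤ m →
      4 ^ ((2 * m + 1).choose m) <
        numColourings 4 2 (2 * m + 1)
          (Finset.powersetCard m (Finset.univ : Finset (Fin (2 * m + 1))) ∪
            Finset.powersetCard (m + 1) (Finset.univ : Finset (Fin (2 * m + 1)))) ∧
      ∀ G : Finset (Finset (Fin (2 * m + 1))),
        IsAntichain (· ⊆ ·) (G : Set (Finset (Fin (2 * m + 1)))) →
        numColourings 4 2 (2 * m + 1) G <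
          numColourings 4 2 (2 * m + 1)
            (Finset.powersetCard m (Finset.univ : Finset (Fin (2 * m + 1))) ∪
              Finset.powersetCard (m + 1) (Finset.univ : Finset (Fin (2 * m + 1)))) := by
  refine ⟨0, fun m _ => ?_⟩
  set F := powersetCard m (univ : Finset (Fin (2 * m + 1))) ∪ powersetCard (m + 1) univ
  have hcard : #F = 2 * (2 * m + 1).choose m := by
    rw [card_two_levels, Nat.choose_symm_half]
    ring
  have hlevel : ∀ A ∈ F, ∀ B ∈ F, A ⊂ B →
      (if #A = m then 0 else 1 : Fin 2) ≠ if #B = m then 0 else 1 := by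
    intro A hA B hB hAB
    obtain ⟨hAm, hBm⟩ := card_eq_of_ssubset_of_mem_two_levels hA hB hAB
    simp [hAm, hBm]
  have hne : F.Nonempty :=
    (powersetCard_nonempty.2 (by rw [card_univ, Fintype.card_fin]; omega)).mono subset_union_left
  have hF : 4 ^ (2 * m + 1).choose m < numColourings 4 2 (2 * m + 1) F :=
    calc 4 ^ (2 * m + 1).choose m < 2 * 2 ^ #F := by
          rw [hcard, pow_mul]
          norm_num
      _ ≤ numColourings (2 * 2) 2 (2 * m + 1) F :=
          mul_pow_card_le_numColourings_two hne _ hlevel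
  refine ⟨hF, fun G hG => ?_⟩
  calc numColourings 4 2 (2 * m + 1) G = 4 ^ #G := numColourings_two_of_isAntichain 4 hG
    _ ≤ 4 ^ (2 * m + 1).choose m := by
        refine Nat.pow_le_pow_right (by norm_num) ?_
        simpa [show (2 * m + 1) / 2 = m by omega] using hG.sperner
    _ < _ := hF
end

section
/- For all integers k ≥ 2 and n ≥ 4k², one has C(n,⌊n/2⌋) ≤ (1 + 2k²/n)·C(n,⌊(n-k)/2⌋); equivalently, C(n,⌊(n-k)/2⌋)⁻¹ ≤ (1 + 2k²/n)·C(n,⌊n/2⌋)⁻¹. -/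
open Finset

theorem one_sub_sum_le_prod_one_sub {ι R : Type*} [CommRing R] [PartialOrder R]
    [IsOrderedRing R] (s : Finset ι) (f : ι → R) (hf₀ : ∀ i ∈ s, 0 ≤ f i)
    (hf₁ : ∀ i ∈ s, f i ≤ 1) : 1 - ∑ i ∈ s, f i ≤ ∏ i ∈ s, (1 - f i) := by
  classical
  induction s using Finset.induction_on with
  | empty => simp
  | insert a s ha ih =>
    rw [sum_insert ha, prod_insert ha]
    have ih := ih (fun i hi ↦ hf₀ i (mem_insert_of_mem hi))
      fun i hi ↦ hf₁ i (mem_insert_of_mem hi)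
    have hsum : 0 ≤ ∑ i ∈ s, f i := sum_nonneg fun i hi ↦ hf₀ i (mem_insert_of_mem hi)
    calc 1 - (f a + ∑ i ∈ s, f i)
        ≤ 1 - (f a + ∑ i ∈ s, f i) + f a * ∑ i ∈ s, f i :=
          le_add_of_nonneg_right (mul_nonneg (hf₀ a (mem_insert_self a s)) hsum)
      _ = (1 - f a) * (1 - ∑ i ∈ s, f i) := by ring
      _ ≤ (1 - f a) * ∏ i ∈ s, (1 - f i) :=
          mul_le_mul_of_nonneg_left ih (sub_nonneg.2 (hf₁ a (mem_insert_self a s)))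

theorem Nat.choose_eq_choose_mul_prod_Ico {n j m : ℕ} (hjm : j ≤ m) (hmn : m ≤ n) :
    (n.choose j : ℝ) = n.choose m * ∏ i ∈ Ico j m, ((i + 1 : ℝ) / (n - i)) := by
  induction m, hjm using Nat.le_induction with
  | base => simp
  | succ m hjm ih =>
    have hm : (m : ℝ) < n := by exact_mod_cast hmn
    have hstep := congrArg (Nat.cast : ℕ → ℝ) (Nat.choose_succ_right_eq n m)
    push_cast [Nat.cast_sub (by omega : m ≤ n)] at hstep
    have hdown : (n.choose m : ℝ) = n.choose (m + 1) * ((m + 1) / (n - m)) := by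
      rw [mul_div_assoc', eq_div_iff (sub_ne_zero.2 hm.ne'), hstep]
    rw [ih (by omega), prod_Ico_succ_top hjm, hdown]
    ring

theorem sum_Ico_sub_two_mul_sub_one (n j m : ℕ) (hjm : j ≤ m) :
    ∑ i ∈ Ico j m, ((n : ℝ) - 2 * i - 1) = (m - j) * (n - m - j) := by
  induction m, hjm using Nat.le_induction with
  | base => simp
  | succ m hjm ih =>
    rw [sum_Ico_succ_top hjm, ih]
    push_cast
    ring

theorem Nat.one_sub_mul_choose_le_choose {n j m : ℕ} (hjm : j ≤ m) (hmn : 2 * m ≤ n) :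
    (1 - 2 * (((m : ℝ) - j) * (n - m - j)) / n) * n.choose m ≤ n.choose j := by
  have hlt : ∀ i ∈ Ico j m, 2 * (i : ℝ) + 2 ≤ n := fun i hi ↦ by
    have := (mem_Ico.1 hi).2
    exact_mod_cast (by omega : 2 * i + 2 ≤ n)
  have hfactor : ∀ i ∈ Ico j m, ((i + 1 : ℝ) / (n - i)) = 1 - (n - 2 * i - 1) / (n - i) := by
    intro i hi
    have hne : (n : ℝ) - i ≠ 0 := by linarith [hlt i hi]
    rw [eq_sub_iff_add_eq, ← add_div, div_eq_one_iff_eq hne]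
    ring
  have hterm : ∀ i ∈ Ico j m, 0 ≤ ((n : ℝ) - 2 * i - 1) / (n - i) ∧
      ((n : ℝ) - 2 * i - 1) / (n - i) ≤ 1 ∧
      ((n : ℝ) - 2 * i - 1) / (n - i) ≤ 2 * ((n : ℝ) - 2 * i - 1) / n := by
    intro i hi
    have := hlt i hi
    refine ⟨div_nonneg (by linarith) (by linarith),
      (div_le_one (by linarith)).2 (by linarith), ?_⟩
    rw [div_le_div_iff₀ (by linarith) (by linarith)]
    nlinarith [mul_nonneg (by linarith : (0 : ℝ) ≤ n - 2 * i - 1)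
      (by linarith : (0 : ℝ) ≤ n - 2 * i)]
  have hprod := one_sub_sum_le_prod_one_sub (Ico j m) (fun i ↦ ((n : ℝ) - 2 * i - 1) / (n - i))
    (fun i hi ↦ (hterm i hi).1) fun i hi ↦ (hterm i hi).2.1
  have hsum : ∑ i ∈ Ico j m, ((n : ℝ) - 2 * i - 1) / (n - i) ≤
      2 * (((m : ℝ) - j) * (n - m - j)) / n := by
    rw [← sum_Ico_sub_two_mul_sub_one n j m hjm, mul_sum, sum_div]
    exact sum_le_sum fun i hi ↦ (hterm i hi).2.2
  rw [Nat.choose_eq_choose_mul_prod_Ico hjm (by omega), prod_congr rfl hfactor,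
    mul_comm (n.choose m : ℝ)]
  exact mul_le_mul_of_nonneg_right (by linarith) (Nat.cast_nonneg _)

theorem Nat.one_sub_mul_choose_half_le_choose_sub_half (n k : ℕ) :
    (1 - (k + 1) ^ 2 / (2 * n : ℝ)) * n.choose (n / 2) ≤ n.choose ((n - k) / 2) := by
  set m := n / 2
  set j := (n - k) / 2
  have hjm : j ≤ m := by omega
  have hjmR : (j : ℝ) ≤ m := by exact_mod_cast hjm
  have hmjR : (m : ℝ) + j ≤ n := by exact_mod_cast (by omega : m + j ≤ n)
  have hnjR : (n : ℝ) ≤ 2 * j + k + 1 := by exact_mod_cast (by omega : n ≤ 2 * j + k + 1)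
  have hamgm : 4 * ((m : ℝ) - j) * (n - m - j) ≤ (k + 1) ^ 2 :=
    (four_mul_le_sq_add ((m : ℝ) - j) (n - m - j)).trans
      (pow_le_pow_left₀ (by linarith) (by linarith) 2)
  have hshift : 2 * (((m : ℝ) - j) * (n - m - j)) / n ≤ (k + 1) ^ 2 / (2 * n) := by
    rw [← mul_div_mul_left _ (n : ℝ) two_ne_zero, ← mul_assoc, ← mul_assoc]
    norm_num only
    exact div_le_div_of_nonneg_right hamgm (by positivity)
  refine le_trans ?_ (Nat.one_sub_mul_choose_le_choose hjm (by omega))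
  gcongr

theorem one_le_one_add_mul_one_sub {k n : ℝ} (hk : 2 ≤ k) (hn : 4 * k ^ 2 ≤ n) :
    1 ≤ (1 + 2 * k ^ 2 / n) * (1 - (k + 1) ^ 2 / (2 * n)) := by
  have hn0 : 0 < n := by nlinarith
  rw [← sub_nonneg]
  have : (1 + 2 * k ^ 2 / n) * (1 - (k + 1) ^ 2 / (2 * n)) - 1 =
      (n * (3 * k ^ 2 - 2 * k - 1) - 2 * k ^ 2 * (k + 1) ^ 2) / (2 * n ^ 2) := by
    field_simp
    ring
  rw [this]
  apply div_nonneg _ (by positivity)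
  nlinarith [mul_le_mul_of_nonneg_right hn (by nlinarith : (0 : ℝ) ≤ 3 * k ^ 2 - 2 * k - 1),
    mul_nonneg (sq_nonneg k) (by nlinarith : (0 : ℝ) ≤ 5 * k ^ 2 - 6 * k - 3)]

/-- For integers `k ≥ 2` and `n ≥ 4k²`,
`C(n,⌊n/2⌋) ≤ (1 + 2k²/n)·C(n,⌊(n-k)/2⌋)`; equivalently,
`C(n,⌊(n-k)/2⌋)⁻¹ ≤ (1 + 2k²/n)·C(n,⌊n/2⌋)⁻¹`. -/
theorem binomial_weight_bound (n k : ℕ) (hk : 2 ≤ k) (hn : 4 * k ^ 2 ≤ n) :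
    (n.choose (n / 2) : ℝ) ≤
      (1 + 2 * (k : ℝ) ^ 2 / (n : ℝ)) * (n.choose ((n - k) / 2) : ℝ) ∧
    ((n.choose ((n - k) / 2) : ℝ))⁻¹ ≤
      (1 + 2 * (k : ℝ) ^ 2 / (n : ℝ)) * ((n.choose (n / 2) : ℝ))⁻¹ := by
  have hm0 : (0 : ℝ) < n.choose (n / 2) := by
    exact_mod_cast Nat.choose_pos (Nat.div_le_self n 2)
  have hj0 : (0 : ℝ) < n.choose ((n - k) / 2) := by exact_mod_cast Nat.choose_pos (by omega)
  have hweight :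
      (n.choose (n / 2) : ℝ) ≤ (1 + 2 * (k : ℝ) ^ 2 / n) * n.choose ((n - k) / 2) :=
    calc (n.choose (n / 2) : ℝ)
        ≤ (1 + 2 * (k : ℝ) ^ 2 / n) * (1 - (k + 1) ^ 2 / (2 * n)) * n.choose (n / 2) :=
          le_mul_of_one_le_left hm0.le
            (one_le_one_add_mul_one_sub (by exact_mod_cast hk) (by exact_mod_cast hn))
      _ ≤ (1 + 2 * (k : ℝ) ^ 2 / n) * n.choose ((n - k) / 2) := by
          rw [mul_assoc]
          gcongr
          exact Nat.one_sub_mul_choose_half_le_choose_sub_half n k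
  refine ⟨hweight, ?_⟩
  rw [← div_eq_mul_inv, le_div_iff₀ hm0, inv_mul_le_iff₀ hj0, mul_comm]
  exact hweight
end
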